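/- Let θ ∈ (0, 1/2) and q ∈ [0, 1/2). Let P = P_{T,θ} on {0,1}³ for the tree T with edge set {{1,2},{2,3}}, and let P^{(q)}(y) = ∑_{x∈{0,1}³} q^{δ(x,y)}·(1−q)^{3−δ(x,y)}·P(x), where δ(x,y) is the Hamming distance. Let y_1,…,y_n be i.i.d. samples from P^{(q)} and set Â^{(q)}_{i,j} := (1/n)·#{k : y_{k,i} = y_{k,j}}. Define β₁ := ((1−q)³+q³)·θ(1−θ)/2 + q(1−q)·(1−θ(1−θ))/2 and β₂ := ((1−q)³+q³)·θ²/2 + q(1−q)·(1−θ²)/2. Then lim_{n→∞} −(1/n)·log ℙ(Â^{(q)}_{1,3} ≥ Â^{(q)}_{1,2}) = −log(1 − 4·((β₁+β₂)/2 − √(β₁β₂))). In particular, at q = 0 this equals −log(1 − θ·(1 − √(4θ(1−θ)))). -/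

import Mathlib

/-!
Put `g y = 𝟙[y₀ = y₂] - 𝟙[y₀ = y₁] ∈ {-1, 0, 1}`: the event is `Sₙ = ∑ₖ g(yₖ) ≥ 0`, and one noisy
sample has `g = -1, 1, 0` with probabilities `2β₁, 2β₂, r = 1 - 2β₁ - 2β₂`. Tilting by `e^{λg}` with
`e^{2λ} = β₁/β₂` makes the step weights symmetric, `(2√(β₁β₂), r, 2√(β₁β₂))`, of total mass
`L = 1 - 4((β₁+β₂)/2 - √(β₁β₂))`, so the Chernoff bound gives `ℙ(Sₙ ≥ 0) ≤ Lⁿ`. Conversely, the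
weights `W(d)` of the tilted walk are symmetric in `d` and decrease along each parity class away
from `0`, so `W(0) + W(1) ≥ Lⁿ / (2n + 1)`, while `ℙ(Sₙ ≥ 0) ≥ ℙ(Sₙ ∈ {0, 1}) ≥ e^{-λ} (W(0) + W(1))`.
Both bounds have exponential rate `-log L`.
-/

open scoped Classical BigOperators
open Filter

noncomputable section

/-- Symmetric pair weight `w(x i, x j)` lifted to unordered pairs. -/
def pairWeight (θ : ℝ) {p : ℕ} (x : Fin p → Bool) : Sym2 (Fin p) → ℝ :=
  Sym2.lift ⟨fun i j => if x i = x j then 1 - θ else θ, fun i j => by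
    dsimp only
    by_cases h : x i = x j
    · rw [if_pos h, if_pos h.symm]
    · rw [if_neg h, if_neg (fun hh => h hh.symm)]⟩

/-- The homogeneous zero-external-field Ising tree distribution. -/
def isingP (θ : ℝ) {p : ℕ} (T : SimpleGraph (Fin p)) (x : Fin p → Bool) : ℝ :=
  (1 / 2) * ∏ e ∈ T.edgeFinset, pairWeight θ x e

/-- Probability of an event `A` about `n` i.i.d. samples from pmf `P`. -/
def iidProb {p : ℕ} (P : (Fin p → Bool) → ℝ) (n : ℕ)
    (A : Set (Fin n → Fin p → Bool)) : ℝ :=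
  ∑ xs : Fin n → Fin p → Bool, if xs ∈ A then ∏ k, P (xs k) else 0

/-- Empirical agreement weight. -/
def Ahat {p n : ℕ} (xs : Fin n → Fin p → Bool) (i j : Fin p) : ℝ :=
  ((Finset.univ.filter (fun k : Fin n => xs k i = xs k j)).card : ℝ) / n

/-- Empirical agreement weight on unordered pairs. -/
def AhatSym {p n : ℕ} (xs : Fin n → Fin p → Bool) : Sym2 (Fin p) → ℝ :=
  Sym2.lift ⟨fun i j => Ahat xs i j, fun i j => by
    have h : (Finset.univ.filter fun k : Fin n => xs k i = xs k j)
        = (Finset.univ.filter fun k : Fin n => xs k j = xs k i) :=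
      Finset.filter_congr (fun k _ => ⟨Eq.symm, Eq.symm⟩)
    simp only [Ahat, h]⟩

/-- The path (Markov chain) tree on 3 nodes with edges {1,2},{2,3}. -/
def chainA : SimpleGraph (Fin 3) := SimpleGraph.fromEdgeSet {s(0,1), s(1,2)}

def chainB : SimpleGraph (Fin 3) := SimpleGraph.fromEdgeSet {s(0,2), s(1,2)}

def chainC : SimpleGraph (Fin 3) := SimpleGraph.fromEdgeSet {s(0,1), s(0,2)}

def path4 : SimpleGraph (Fin 4) := SimpleGraph.fromEdgeSet {s(0,1), s(1,2), s(2,3)}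

def Kexp (θ : ℝ) : ℝ := -Real.log (1 - θ * (1 - Real.sqrt (4 * θ * (1 - θ))))

def sigmaSq (θ : ℝ) : ℝ := θ * Real.sqrt (4 * θ * (1 - θ)) * Real.exp (Kexp θ)

def zTheta (θ : ℝ) : ℝ := Real.sqrt (θ / (1 - θ))

def ftilde (θ : ℝ) (n : ℕ) : ℝ :=
  Real.exp (-(n : ℝ) * Kexp θ) / Real.sqrt (2 * Real.pi * sigmaSq θ * n)
    * (1 + (1 - 3 * sigmaSq θ) / (8 * sigmaSq θ * n))

def fn (θ : ℝ) (n : ℕ) : ℝ :=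
  ftilde θ n / (1 - zTheta θ)
    * (1 - zTheta θ * (1 + zTheta θ) / (2 * (1 - zTheta θ) ^ 2 * sigmaSq θ * n))

/-- Hamming distance. -/
def hamming {p : ℕ} (x y : Fin p → Bool) : ℕ :=
  (Finset.univ.filter (fun i => x i ≠ y i)).card

/-- Noisy (BSC with crossover probability q) version of a distribution. -/
def noisy (q : ℝ) {p : ℕ} (P : (Fin p → Bool) → ℝ) (y : Fin p → Bool) : ℝ :=
  ∑ x : Fin p → Bool, q ^ hamming x y * (1 - q) ^ (p - hamming x y) * P x

def beta1 (θ q : ℝ) : ℝ :=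
  ((1 - q) ^ 3 + q ^ 3) * (θ * (1 - θ) / 2) + q * (1 - q) * ((1 - θ * (1 - θ)) / 2)

def beta2 (θ q : ℝ) : ℝ :=
  ((1 - q) ^ 3 + q ^ 3) * (θ ^ 2 / 2) + q * (1 - q) * ((1 - θ ^ 2) / 2)

def Kq (θ q : ℝ) : ℝ :=
  -Real.log (1 - 4 * ((beta1 θ q + beta2 θ q) / 2 - Real.sqrt (beta1 θ q * beta2 θ q)))

def mu2 (θ q : ℝ) : ℝ := 4 * Real.sqrt (beta1 θ q * beta2 θ q) * Real.exp (Kq θ q)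

def zq (θ q : ℝ) : ℝ := Real.sqrt (beta2 θ q / beta1 θ q)

def ftildeq (θ q : ℝ) (n : ℕ) : ℝ :=
  Real.exp (-(n : ℝ) * Kq θ q) / Real.sqrt (2 * Real.pi * mu2 θ q * n)
    * (1 + (1 - 3 * mu2 θ q) / (8 * mu2 θ q * n))

def fnq (θ q : ℝ) (n : ℕ) : ℝ :=
  ftildeq θ q n / (1 - zq θ q)
    * (1 - zq θ q * (1 + zq θ q) / (2 * (1 - zq θ q) ^ 2 * mu2 θ q * n))

/-- Marginal of a pmf on `{0,1}^p` on a single coordinate. -/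
def marg1 {p : ℕ} (Q : (Fin p → Bool) → ℝ) (i : Fin p) (a : Bool) : ℝ :=
  ∑ x ∈ Finset.univ.filter (fun x : Fin p → Bool => x i = a), Q x

/-- Marginal of a pmf on `{0,1}^p` on a pair of coordinates. -/
def marg2 {p : ℕ} (Q : (Fin p → Bool) → ℝ) (i j : Fin p) (a b : Bool) : ℝ :=
  ∑ x ∈ Finset.univ.filter (fun x : Fin p → Bool => x i = a ∧ x j = b), Q x

/-- Kullback-Leibler divergence between pmfs on a finite type. -/
def klDiv {X : Type*} [Fintype X] (Q P : X → ℝ) : ℝ :=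
  ∑ x : X, Q x * Real.log (Q x / P x)

/-- Empirical mutual information between coordinates `i` and `j`. -/
def mutInf {p : ℕ} (Q : (Fin p → Bool) → ℝ) (i j : Fin p) : ℝ :=
  ∑ a : Bool, ∑ b : Bool,
    marg2 Q i j a b * Real.log (marg2 Q i j a b / (marg1 Q i a * marg1 Q j b))

end

open Finset Topology

section LazySymmetric

variable {W : ℕ → ℤ → ℝ} {a b : ℝ}

/-- Monotonicity only holds along each parity class: for `b < a` the weights need not be
unimodal. -/
lemma symmetric_recurrence_invariant (ha : 0 ≤ a) (hb : 0 ≤ b)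
    (h0 : ∀ d, W 0 d = if d = 0 then 1 else 0)
    (hsucc : ∀ n d, W (n + 1) d = a * (W n (d - 1) + W n (d + 1)) + b * W n d) (n : ℕ) :
    (∀ d, 0 ≤ W n d) ∧ (∀ d, W n (-d) = W n d) ∧ ∀ d, 0 ≤ d → W n (d + 2) ≤ W n d := by
  induction n with
  | zero =>
    refine ⟨fun d => ?_, fun d => ?_, fun d hd => ?_⟩ <;> simp only [h0]
    · split_ifs <;> norm_num
    · simp
    · rw [if_neg (by omega)]; split_ifs <;> norm_num
  | succ n ih =>
    obtain ⟨hnn, hsymm, hmono⟩ := ih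
    refine ⟨fun d => ?_, fun d => ?_, fun d hd => ?_⟩ <;> simp only [hsucc]
    · have := hnn (d - 1); have := hnn (d + 1); have := hnn d; positivity
    · rw [show -d - 1 = -(d + 1) by ring, show -d + 1 = -(d - 1) by ring, hsymm, hsymm, hsymm]
      ring
    · have h1 : W n (d + 2 - 1) ≤ W n (d - 1) := by
        rw [show d + 2 - 1 = d - 1 + 2 by ring]
        rcases eq_or_lt_of_le hd with rfl | hd
        · exact (hsymm 1).symm.le
        · exact hmono (d - 1) (by omega)
      have h2 : W n (d + 2 + 1) ≤ W n (d + 1) := by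
        rw [add_right_comm]; exact hmono (d + 1) (by omega)
      nlinarith [hmono d hd]

lemma le_zero_add_one_of_symmetric_recurrence (ha : 0 ≤ a) (hb : 0 ≤ b)
    (h0 : ∀ d, W 0 d = if d = 0 then 1 else 0)
    (hsucc : ∀ n d, W (n + 1) d = a * (W n (d - 1) + W n (d + 1)) + b * W n d) (n : ℕ) (d : ℤ) :
    W n d ≤ W n 0 + W n 1 := by
  obtain ⟨hnn, hsymm, hmono⟩ := symmetric_recurrence_invariant ha hb h0 hsucc n
  have key : ∀ k : ℕ, W n k ≤ W n 0 + W n 1 := by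
    intro k
    induction k using Nat.strong_induction_on with
    | _ k ih =>
      match k, ih with
      | 0, _ => simpa using hnn 1
      | 1, _ => simpa using hnn 0
      | k + 2, ih =>
        have h : W n ((k : ℤ) + 2) ≤ W n k := hmono k (by positivity)
        push_cast
        exact h.trans (ih k (by omega))
  rcases le_total 0 d with hd | hd
  · simpa [hd] using key d.toNat
  · simpa [← hsymm d, hd] using key (-d).toNat

end LazySymmetric

namespace LatticeWalk

variable {Y : Type*}

noncomputable def tilt (ν : Y → ℝ) (g : Y → ℤ) (l : ℝ) (y : Y) : ℝ :=
  ν y * Real.exp (l * g y)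

lemma prod_tilt (ν : Y → ℝ) (g : Y → ℤ) (l : ℝ) {n : ℕ} (ys : Fin n → Y) :
    ∏ k, tilt ν g l (ys k) = (∏ k, ν (ys k)) * Real.exp (l * ↑(∑ k, g (ys k))) := by
  simp only [tilt, prod_mul_distrib, Int.cast_sum, mul_sum, Real.exp_sum]

variable [Fintype Y]

lemma sum_fun_fin_succ {M : Type*} [AddCommMonoid M] {n : ℕ} (f : (Fin (n + 1) → Y) → M) :
    ∑ ys, f ys = ∑ y, ∑ ys : Fin n → Y, f (Fin.cons y ys) := by
  rw [← (Fin.consEquiv fun _ => Y).sum_comp, Fintype.sum_prod_type]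
  rfl

lemma sum_walk_nonneg_le {ν : Y → ℝ} (hν : ∀ y, 0 ≤ ν y) (g : Y → ℤ) {l : ℝ} (hl : 0 ≤ l)
    (n : ℕ) :
    ∑ ys : Fin n → Y with 0 ≤ ∑ k, g (ys k), ∏ k, ν (ys k) ≤ (∑ y, tilt ν g l y) ^ n := by
  rw [Fintype.sum_pow, sum_filter]
  refine sum_le_sum fun ys _ => ?_
  rw [prod_tilt]
  have hp : 0 ≤ ∏ k, ν (ys k) := prod_nonneg fun _ _ => hν _
  split_ifs with h
  · exact le_mul_of_one_le_right hp (Real.one_le_exp (mul_nonneg hl (by exact_mod_cast h)))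
  · positivity

noncomputable def walkMass (ν : Y → ℝ) (g : Y → ℤ) (n : ℕ) (d : ℤ) : ℝ :=
  ∑ ys : Fin n → Y with ∑ k, g (ys k) = d, ∏ k, ν (ys k)

lemma walkMass_nonneg {ν : Y → ℝ} (hν : ∀ y, 0 ≤ ν y) (g : Y → ℤ) (n : ℕ) (d : ℤ) :
    0 ≤ walkMass ν g n d :=
  sum_nonneg fun _ _ => prod_nonneg fun _ _ => hν _

lemma walkMass_tilt (ν : Y → ℝ) (g : Y → ℤ) (l : ℝ) (n : ℕ) (d : ℤ) :
    walkMass (tilt ν g l) g n d = Real.exp (l * d) * walkMass ν g n d := by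
  rw [walkMass, walkMass, mul_sum]
  refine sum_congr rfl fun ys hys => ?_
  rw [prod_tilt, (mem_filter.1 hys).2, mul_comm]

lemma walkMass_zero (ν : Y → ℝ) (g : Y → ℤ) (d : ℤ) :
    walkMass ν g 0 d = if d = 0 then 1 else 0 := by
  by_cases h : d = 0 <;> simp [walkMass, h, eq_comm]

lemma walkMass_succ (ν : Y → ℝ) (g : Y → ℤ) (n : ℕ) (d : ℤ) :
    walkMass ν g (n + 1) d = ∑ y, ν y * walkMass ν g n (d - g y) := by
  simp only [walkMass, sum_filter, mul_sum]
  rw [sum_fun_fin_succ]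
  refine sum_congr rfl fun y _ => sum_congr rfl fun ys _ => ?_
  simp only [Fin.sum_univ_succ, Fin.prod_univ_succ, Fin.cons_zero, Fin.cons_succ,
    eq_sub_iff_add_eq', mul_ite, mul_zero]

lemma sum_walkMass {g : Y → ℤ} (hg : ∀ y, |g y| ≤ 1) (ν : Y → ℝ) (n : ℕ) :
    ∑ d ∈ Icc (-n : ℤ) n, walkMass ν g n d = (∑ y, ν y) ^ n := by
  rw [Fintype.sum_pow]
  refine sum_fiberwise_of_maps_to (fun ys _ => ?_) _
  have hsum : ∑ k, |g (ys k)| ≤ n := by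
    simpa using sum_le_sum fun k (_ : k ∈ univ) => hg (ys k)
  rw [mem_Icc, ← abs_le]
  exact (abs_sum_le_sum_abs _ _).trans hsum

lemma walkMass_zero_add_walkMass_one_le (ν : Y → ℝ) (hν : ∀ y, 0 ≤ ν y) (g : Y → ℤ) (n : ℕ) :
    walkMass ν g n 0 + walkMass ν g n 1
      ≤ ∑ ys : Fin n → Y with 0 ≤ ∑ k, g (ys k), ∏ k, ν (ys k) := by
  simp only [walkMass, sum_filter, ← sum_add_distrib]
  refine sum_le_sum fun ys _ => ?_
  have hp : 0 ≤ ∏ k, ν (ys k) := prod_nonneg fun _ _ => hν _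
  split_ifs <;> first | omega | linarith

lemma pow_le_sum_walk_nonneg {ν : Y → ℝ} (hν : ∀ y, 0 ≤ ν y) {g : Y → ℤ}
    (hg : ∀ y, |g y| ≤ 1) {l a b : ℝ} (hl : 0 ≤ l) (ha : 0 ≤ a) (hb : 0 ≤ b)
    (hstep : ∀ F : ℤ → ℝ, ∑ y, tilt ν g l y * F (g y) = a * (F (-1) + F 1) + b * F 0) (n : ℕ) :
    (2 * a + b) ^ n
      ≤ Real.exp l * (2 * n + 1) * ∑ ys : Fin n → Y with 0 ≤ ∑ k, g (ys k), ∏ k, ν (ys k) := by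
  set W := walkMass (tilt ν g l) g
  have hW : ∀ d, W n d ≤ W n 0 + W n 1 := by
    refine le_zero_add_one_of_symmetric_recurrence ha hb (walkMass_zero _ _) (fun m d => ?_) n
    rw [walkMass_succ, hstep fun v => W m (d - v), sub_neg_eq_add, sub_zero]
    ring
  have htotal : (2 * a + b) ^ n = ∑ d ∈ Icc (-n : ℤ) n, W n d := by
    have hmass := hstep fun _ => 1
    simp only [mul_one] at hmass
    rw [sum_walkMass hg, hmass]
    ring
  have hcard : ((Icc (-n : ℤ) n).card : ℝ) = 2 * n + 1 := by
    rw [Int.card_Icc, show (n : ℤ) + 1 - -n = ((2 * n + 1 : ℕ) : ℤ) by push_cast; ring,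
      Int.toNat_natCast]
    push_cast
    ring
  have h01 : W n 0 + W n 1 ≤ Real.exp l * (walkMass ν g n 0 + walkMass ν g n 1) := by
    simp only [W, walkMass_tilt]
    have := walkMass_nonneg hν g n 0
    have := walkMass_nonneg hν g n 1
    have := Real.one_le_exp hl
    simp only [Int.cast_zero, mul_zero, Real.exp_zero, one_mul, Int.cast_one, mul_one]
    nlinarith
  calc (2 * a + b) ^ n = ∑ d ∈ Icc (-n : ℤ) n, W n d := htotal
    _ ≤ ∑ _d ∈ Icc (-n : ℤ) n, (W n 0 + W n 1) := sum_le_sum fun d _ => hW d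
    _ = (2 * n + 1) * (W n 0 + W n 1) := by rw [sum_const, nsmul_eq_mul, hcard]
    _ ≤ (2 * n + 1) * (Real.exp l * (walkMass ν g n 0 + walkMass ν g n 1)) := by gcongr
    _ ≤ _ := by
      rw [mul_left_comm, ← mul_assoc]
      gcongr
      exact walkMass_zero_add_walkMass_one_le ν hν g n

end LatticeWalk

lemma tendsto_log_two_mul_add_one_div :
    Tendsto (fun n : ℕ => Real.log (2 * n + 1) / n) atTop (𝓝 0) := by
  have h := (Real.tendsto_pow_log_div_mul_add_atTop (1 / 2) (-1 / 2) 1 (by norm_num)).comp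
    (tendsto_atTop_add_const_right _ 1
      (tendsto_natCast_atTop_atTop.const_mul_atTop (by norm_num : (0 : ℝ) < 2)))
  refine h.congr fun n => ?_
  simp only [Function.comp, pow_one]
  congr 1
  ring

lemma tendsto_neg_inv_mul_log_of_bounds {P : ℕ → ℝ} {L C : ℝ} (hL : 0 < L) (hC : 0 < C)
    (hup : ∀ n, P n ≤ L ^ n) (hlow : ∀ n, L ^ n ≤ C * (2 * n + 1) * P n) :
    Tendsto (fun n : ℕ => -(1 / (n : ℝ)) * Real.log (P n)) atTop (𝓝 (-Real.log L)) := by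
  have hP : ∀ n, 0 < P n := fun n =>
    pos_of_mul_pos_right ((pow_pos hL n).trans_le (hlow n)) (by positivity)
  have herr : Tendsto (fun n : ℕ => -Real.log L + (Real.log C / n + Real.log (2 * n + 1) / n))
      atTop (𝓝 (-Real.log L)) := by
    simpa using tendsto_const_nhds.add
      ((tendsto_const_div_atTop_nhds_zero_nat (Real.log C)).add tendsto_log_two_mul_add_one_div)
  refine tendsto_of_tendsto_of_tendsto_of_le_of_le' tendsto_const_nhds herr ?_ ?_
  all_goals
    filter_upwards [eventually_gt_atTop 0] with n hn
    have hn : (0 : ℝ) < n := by exact_mod_cast hn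
  · have h := Real.log_le_log (hP n) (hup n)
    rw [Real.log_pow] at h
    rw [neg_mul, neg_le_neg_iff, one_div_mul_eq_div, div_le_iff₀ hn]
    linarith
  · have h := Real.log_le_log (pow_pos hL n) (hlow n)
    rw [Real.log_pow, Real.log_mul (by positivity) (hP n).ne',
      Real.log_mul hC.ne' (by positivity)] at h
    rw [← add_div, show -(1 / (n : ℝ)) * Real.log (P n)
      = -Real.log L + (n * Real.log L - Real.log (P n)) / n by field_simp; ring]
    gcongr
    linarith

lemma chainA_edgeFinset : chainA.edgeFinset = {s(0, 1), s(1, 2)} := by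
  ext e
  rw [SimpleGraph.mem_edgeFinset, chainA, SimpleGraph.edgeSet_fromEdgeSet, Set.mem_sdiff]
  simp only [Set.mem_insert_iff, Set.mem_singleton_iff, mem_insert, mem_singleton]
  constructor
  · exact And.left
  · rintro (rfl | rfl) <;> exact ⟨by simp, by decide⟩

lemma isingP_chainA (θ : ℝ) (x : Fin 3 → Bool) :
    isingP θ chainA x
      = (if x 0 = x 1 then 1 - θ else θ) * (if x 1 = x 2 then 1 - θ else θ) / 2 := by
  rw [isingP, chainA_edgeFinset, prod_pair (by decide)]
  simp only [pairWeight, Sym2.lift_mk]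
  ring

lemma noisy_isingP_chainA_nonneg {θ q : ℝ} (hθ0 : 0 ≤ θ) (hθ1 : θ ≤ 1) (hq0 : 0 ≤ q) (hq1 : q ≤ 1)
    (y : Fin 3 → Bool) : 0 ≤ noisy q (isingP θ chainA) y := by
  have : 0 ≤ 1 - q := by linarith
  have : 0 ≤ 1 - θ := by linarith
  refine sum_nonneg fun x _ => mul_nonneg (by positivity) ?_
  rw [isingP_chainA]
  split_ifs <;> positivity

lemma sum_fin_three_bool {M : Type*} [AddCommMonoid M] (f : (Fin 3 → Bool) → M) :
    ∑ x, f x = f ![false, false, false] + f ![false, false, true] + f ![false, true, false]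
      + f ![false, true, true] + f ![true, false, false] + f ![true, false, true]
      + f ![true, true, false] + f ![true, true, true] := by
  have h : (univ : Finset (Fin 3 → Bool)) =
      {![false, false, false], ![false, false, true], ![false, true, false], ![false, true, true],
       ![true, false, false], ![true, false, true], ![true, true, false], ![true, true, true]} := by
    decide
  rw [h]
  repeat rw [sum_insert (by decide)]
  rw [sum_singleton]
  abel

lemma hamming_fin_three (x y : Fin 3 → Bool) : hamming x y =
    (if x 0 = y 0 then 0 else 1) + (if x 1 = y 1 then 0 else 1) + (if x 2 = y 2 then 0 else 1) := by
  revert x y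
  decide

/-- The contribution of one sample to `n • (Ahat ys 0 2 - Ahat ys 0 1)`. -/
def agreementGap (y : Fin 3 → Bool) : ℤ :=
  (if y 0 = y 2 then 1 else 0) - (if y 0 = y 1 then 1 else 0)

lemma abs_agreementGap_le (y : Fin 3 → Bool) : |agreementGap y| ≤ 1 := by
  unfold agreementGap
  split_ifs <;> norm_num

lemma Ahat_le_Ahat_iff {n : ℕ} (ys : Fin n → Fin 3 → Bool) :
    Ahat ys 0 1 ≤ Ahat ys 0 2 ↔ 0 ≤ ∑ k, agreementGap (ys k) := by
  have h : Ahat ys 0 2 - Ahat ys 0 1 = ((∑ k, agreementGap (ys k) : ℤ) : ℝ) / n := by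
    simp only [Ahat, agreementGap, ← sub_div, natCast_card_filter, Int.cast_sum, Int.cast_sub,
      apply_ite (Int.cast : ℤ → ℝ), Int.cast_one, Int.cast_zero, sum_sub_distrib]
  rw [← sub_nonneg, h]
  rcases n.eq_zero_or_pos with rfl | hn
  · simp
  · rw [le_div_iff₀ (by exact_mod_cast hn), zero_mul]
    norm_cast

lemma iidProb_Ahat_le_Ahat (ν : (Fin 3 → Bool) → ℝ) (n : ℕ) :
    iidProb ν n {ys | Ahat ys 0 1 ≤ Ahat ys 0 2}
      = ∑ ys : Fin n → Fin 3 → Bool with 0 ≤ ∑ k, agreementGap (ys k), ∏ k, ν (ys k) := by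
  simp only [iidProb, sum_filter, Set.mem_ofPred_eq, Ahat_le_Ahat_iff]

lemma sum_noisy_isingP_chainA_mul (θ q : ℝ) (F : ℤ → ℝ) :
    ∑ y, noisy q (isingP θ chainA) y * F (agreementGap y)
      = 2 * beta1 θ q * F (-1) + 2 * beta2 θ q * F 1
        + (1 - 2 * beta1 θ q - 2 * beta2 θ q) * F 0 := by
  simp only [noisy, isingP_chainA, hamming_fin_three, agreementGap, sum_fin_three_bool]
  norm_num [beta1, beta2, Matrix.cons_val_two, Matrix.tail_cons, Matrix.head_cons]
  ring

lemma beta2_le_beta1 {θ : ℝ} (hθ0 : 0 ≤ θ) (hθ1 : θ ≤ 1 / 2) (q : ℝ) : beta2 θ q ≤ beta1 θ q := by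
  have h : beta1 θ q - beta2 θ q = θ * (1 - 2 * θ) * (1 - 2 * q) ^ 2 / 2 := by
    unfold beta1 beta2
    ring
  have : 0 ≤ 1 - 2 * θ := by linarith
  nlinarith [show 0 ≤ θ * (1 - 2 * θ) * (1 - 2 * q) ^ 2 / 2 by positivity]

lemma one_sub_two_beta1_sub_two_beta2_pos {θ : ℝ} (hθ : θ ≤ 1 / 2) (q : ℝ) :
    0 < 1 - 2 * beta1 θ q - 2 * beta2 θ q := by
  have h : 1 - 2 * beta1 θ q - 2 * beta2 θ q = ((1 - 2 * θ) * (1 - 2 * q) ^ 2 + 1) / 2 := by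
    unfold beta1 beta2
    ring
  have : 0 ≤ 1 - 2 * θ := by linarith
  rw [h]
  positivity

lemma beta2_pos {θ q : ℝ} (hθ0 : 0 < θ) (hθ1 : θ ≤ 1) (hq0 : 0 ≤ q) (hq1 : q ≤ 1) :
    0 < beta2 θ q := by
  have h1 : 0 < (1 - q) ^ 3 + q ^ 3 := by nlinarith [sq_nonneg (1 - 2 * q)]
  have h2 : 0 ≤ q * (1 - q) := mul_nonneg hq0 (by linarith)
  have h3 : 0 ≤ 1 - θ ^ 2 := by nlinarith
  unfold beta2
  positivity

lemma sum_tilt_noisy_isingP_chainA_mul {θ q : ℝ} (hβ1 : 0 < beta1 θ q) (hβ2 : 0 < beta2 θ q)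
    (F : ℤ → ℝ) :
    ∑ y, LatticeWalk.tilt (noisy q (isingP θ chainA)) agreementGap
        (Real.log (beta1 θ q / beta2 θ q) / 2) y * F (agreementGap y)
      = 2 * √(beta1 θ q * beta2 θ q) * (F (-1) + F 1)
        + (1 - 2 * beta1 θ q - 2 * beta2 θ q) * F 0 := by
  set l := Real.log (beta1 θ q / beta2 θ q) / 2
  have hexp : Real.exp l ^ 2 = beta1 θ q / beta2 θ q := by
    rw [← Real.exp_nat_mul, show ((2 : ℕ) : ℝ) * l = Real.log (beta1 θ q / beta2 θ q) by
      simp only [l]; push_cast; ring, Real.exp_log (by positivity)]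
  have hneg : beta1 θ q * Real.exp (l * (-1 : ℤ)) = √(beta1 θ q * beta2 θ q) := by
    rw [eq_comm, Real.sqrt_eq_iff_eq_sq (by positivity) (by positivity), Int.cast_neg,
      Int.cast_one, mul_neg_one, Real.exp_neg, mul_pow, inv_pow, hexp]
    field_simp
  have hpos : beta2 θ q * Real.exp (l * (1 : ℤ)) = √(beta1 θ q * beta2 θ q) := by
    rw [eq_comm, Real.sqrt_eq_iff_eq_sq (by positivity) (by positivity), Int.cast_one, mul_one,
      mul_pow, hexp]
    field_simp
  simp only [LatticeWalk.tilt, mul_assoc]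
  rw [sum_noisy_isingP_chainA_mul θ q fun v => Real.exp (l * v) * F v, Int.cast_zero, mul_zero,
    Real.exp_zero]
  linear_combination (2 * F (-1)) * hneg + (2 * F 1) * hpos

lemma one_sub_four_mul_beta_zero {θ : ℝ} (hθ : 0 ≤ θ) :
    1 - 4 * ((beta1 θ 0 + beta2 θ 0) / 2 - √(beta1 θ 0 * beta2 θ 0))
      = 1 - θ * (1 - √(4 * θ * (1 - θ))) := by
  have h1 : √(beta1 θ 0 * beta2 θ 0) = θ / 2 * √(θ * (1 - θ)) := by
    rw [show beta1 θ 0 * beta2 θ 0 = (θ / 2) ^ 2 * (θ * (1 - θ)) by unfold beta1 beta2; ring,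
      Real.sqrt_mul (sq_nonneg _), Real.sqrt_sq (by positivity)]
  have h2 : √(4 * θ * (1 - θ)) = 2 * √(θ * (1 - θ)) := by
    rw [show 4 * θ * (1 - θ) = 2 ^ 2 * (θ * (1 - θ)) by ring,
      Real.sqrt_mul (sq_nonneg 2), Real.sqrt_sq (by norm_num)]
  rw [h1, h2]
  unfold beta1 beta2
  ring

/-- the error exponent for the crossover event using noisy samples
equals `-log(1 - 4((β₁+β₂)/2 - √(β₁β₂)))`; at `q = 0` it reduces to the noiseless
exponent. -/
theorem stmt17 (θ q : ℝ) (hθ0 : 0 < θ) (hθ1 : θ < 1 / 2) (hq0 : 0 ≤ q) (hq1 : q < 1 / 2) :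
    Filter.Tendsto (fun n : ℕ =>
      -(1 / (n : ℝ)) * Real.log (iidProb (noisy q (isingP θ chainA)) n
        {ys | Ahat ys 0 1 ≤ Ahat ys 0 2}))
      Filter.atTop
      (nhds (-Real.log (1 - 4 * ((beta1 θ q + beta2 θ q) / 2
        - Real.sqrt (beta1 θ q * beta2 θ q))))) ∧
    (q = 0 →
      -Real.log (1 - 4 * ((beta1 θ q + beta2 θ q) / 2 - Real.sqrt (beta1 θ q * beta2 θ q)))
        = -Real.log (1 - θ * (1 - Real.sqrt (4 * θ * (1 - θ))))) := by
  have hβ2 := beta2_pos hθ0 (by linarith) hq0 (by linarith)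
  have hβ21 := beta2_le_beta1 hθ0.le hθ1.le q
  have hβ1 := hβ2.trans_le hβ21
  have hr := one_sub_two_beta1_sub_two_beta2_pos hθ1.le q
  have hν := noisy_isingP_chainA_nonneg hθ0.le (by linarith) hq0 (by linarith)
  set l := Real.log (beta1 θ q / beta2 θ q) / 2
  have hl : 0 ≤ l := div_nonneg (Real.log_nonneg ((one_le_div hβ2).2 hβ21)) zero_le_two
  have hstep := sum_tilt_noisy_isingP_chainA_mul hβ1 hβ2
  have hmass : ∑ y, LatticeWalk.tilt (noisy q (isingP θ chainA)) agreementGap l y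
      = 2 * (2 * √(beta1 θ q * beta2 θ q)) + (1 - 2 * beta1 θ q - 2 * beta2 θ q) := by
    have h := hstep fun _ => 1
    simp only [mul_one] at h
    rw [h]
    ring
  have hL : 2 * (2 * √(beta1 θ q * beta2 θ q)) + (1 - 2 * beta1 θ q - 2 * beta2 θ q)
      = 1 - 4 * ((beta1 θ q + beta2 θ q) / 2 - √(beta1 θ q * beta2 θ q)) := by ring
  refine ⟨?_, fun hq => by rw [hq, one_sub_four_mul_beta_zero hθ0.le]⟩
  refine tendsto_neg_inv_mul_log_of_bounds (C := Real.exp l) (by rw [← hL]; positivity)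
    (Real.exp_pos _) (fun n => ?_) (fun n => ?_) <;> rw [iidProb_Ahat_le_Ahat, ← hL]
  · exact hmass ▸ LatticeWalk.sum_walk_nonneg_le hν agreementGap hl n
  · exact LatticeWalk.pow_le_sum_walk_nonneg hν abs_agreementGap_le hl (by positivity) hr.le
      hstep n
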